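/- arXiv:1612.07638 — 3 statements merged into one kernel-verified Lean document; each statement's English description precedes it below -/
import Mathlib

section
/- Let (R,m) be a Noetherian local ring and M a finitely generated R-module of dimension d > 0, and let U_M(0) denote its unmixed component, i.e., the largest submodule of M of dimension strictly less than d. If x is a parameter element of M contained in Ann(U_M(0)), then U_M(0) = 0 :_M x. -/
open Submodule IsLocalRing Classical CategoryTheory

section Defs

variable (R : Type) [CommRing R]

/-- Krull dimension of a module: `dim (R / Ann M)`. -/
noncomputable def moduleDim (M : Type) [AddCommGroup M] [Module R M] : WithBot ℕ∞ :=
  ringKrullDim (R ⧸ Module.annihilator R M)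

/-- Length of a module, as the Krull dimension of its lattice of submodules
(read as `0` if the module is zero or not of finite length). -/
noncomputable def flen (M : Type) [AddCommGroup M] [Module R M] : ℕ :=
  (WithBot.unbotD 0 (Order.krullDim (Submodule R M))).toNat

/-- Krull dimension of a module, as a natural number. -/
noncomputable def dimnat (N : Type) [AddCommGroup N] [Module R N] : ℕ :=
  (WithBot.unbotD 0 (moduleDim R N)).toNat

variable {R}

/-- A system of parameters of `M`: `d` elements of the maximal ideal such that the quotient
of `M` by the submodule they generate has dimension `≤ 0` (i.e. finite length). -/
def IsSOP [IsLocalRing R] {d : ℕ} (M : Type) [AddCommGroup M] [Module R M]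
    (x : Fin d → R) : Prop :=
  (∀ i, x i ∈ maximalIdeal R) ∧
    moduleDim R (M ⧸ (Ideal.span (Set.range x) • ⊤ : Submodule R M)) ≤ 0

variable (R)

/-- The ideal `b(M)`: the intersection, over all systems of parameters `x₁, …, x_d` of `M`
and all `i ≤ d`, of the annihilators of `((x₁,…,x_{i-1})M : x_i)/(x₁,…,x_{i-1})M`. -/
noncomputable def bIdeal [IsLocalRing R] (M : Type) [AddCommGroup M] [Module R M]
    (d : ℕ) : Ideal R :=
  ⨅ (x : Fin d → R) (_ : IsSOP M x) (i : Fin d),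
    Module.annihilator R
      ↥(LinearMap.ker (LinearMap.lsmul R
        (M ⧸ (Ideal.span (x '' {j | j < i}) • ⊤ : Submodule R M)) (x i)))

variable {R}

/-- A parameter element of the `d`-dimensional module `M`:
an element of the maximal ideal with `dim M/xM = d - 1`. -/
def IsParamElt [IsLocalRing R] (d : ℕ) (M : Type) [AddCommGroup M] [Module R M]
    (x : R) : Prop :=
  x ∈ maximalIdeal R ∧
    moduleDim R (M ⧸ (Ideal.span {x} • ⊤ : Submodule R M)) = ((d - 1 : ℕ) : WithBot ℕ∞)

/-- `U` is the unmixed component `U_M(0)` of the `d`-dimensional module `M`: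
the largest submodule of dimension `< d`. -/
def IsUnmixedComponent (d : ℕ) {M : Type} [AddCommGroup M] [Module R M]
    (U : Submodule R M) : Prop :=
  moduleDim R ↥U < (d : WithBot ℕ∞) ∧
    ∀ N : Submodule R M, moduleDim R ↥N < (d : WithBot ℕ∞) → N ≤ U

/-- The depth of a module over a local ring: the supremum of lengths of regular sequences
contained in the maximal ideal. -/
noncomputable def moduleDepth (S : Type) [CommRing S] [IsLocalRing S]
    (N : Type) [AddCommGroup N] [Module S N] : ℕ∞ :=
  ⨆ (rs : List S) (_ : ∀ r ∈ rs, r ∈ maximalIdeal S)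
    (_ : RingTheory.Sequence.IsRegular N rs), (rs.length : ℕ∞)

/-- A witness that `R` is a homomorphic image of a Cohen–Macaulay Noetherian local ring. -/
structure CMQuotientWitness (R : Type) [CommRing R] where
  S : Type
  [commRing : CommRing S]
  [localRing : IsLocalRing S]
  noetherian : IsNoetherianRing S
  depth_eq_dim : (moduleDepth S S : WithBot ℕ∞) = moduleDim S S
  f : S →+* R
  surjective : Function.Surjective f

variable (R)

/-- The Hilbert–Samuel multiplicity `e₀(I, M)` of a `d`-dimensional module `M`, characterized by
`ℓ(M/I^{n+1}M) · d! / n^d → e₀(I, M)`. -/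
noncomputable def mult (I : Ideal R) (M : Type) [AddCommGroup M] [Module R M]
    (d : ℕ) : ℕ :=
  if h : ∃ e : ℕ, Filter.Tendsto
      (fun n : ℕ =>
        (flen R (M ⧸ ((I ^ (n + 1)) • ⊤ : Submodule R M)) : ℝ) * (Nat.factorial d) / ((n : ℝ) ^ d))
      Filter.atTop (nhds (e : ℝ))
  then h.choose else 0

/-- `x` is a superficial element of `M` with respect to `I`. -/
def IsSuperficial [IsLocalRing R] (I : Ideal R) (M : Type) [AddCommGroup M] [Module R M]
    (x : R) : Prop :=
  x ∈ I ∧ x ∉ maximalIdeal R * I ∧ ∃ c : ℕ, ∀ n ≥ c,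
    (Submodule.comap (LinearMap.lsmul R M x) ((I ^ (n + 1)) • ⊤) ⊓ ((I ^ c) • ⊤)
      : Submodule R M) = (I ^ n) • ⊤

/-- `ℓ_{R_p}(H⁰_{pR_p}(M_p))`: the length over `R_p` of the `pR_p`-torsion of `M_p`. -/
noncomputable def locLenH0 (p : Ideal R) (M : Type) [AddCommGroup M] [Module R M] : ℕ :=
  if hp : p.IsPrime then
    letI := hp
    flen (Localization.AtPrime p)
      ↥(⨆ k : ℕ, Submodule.torsionBySet (Localization.AtPrime p)
          (LocalizedModule p.primeCompl M)
          ((Ideal.map (algebraMap R (Localization.AtPrime p)) p ^ k : Ideal _) : Set _))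
  else 0

/-- `ℓ_{R_p}(M_p)`: the length of the localization of `M` at `p` over `R_p`. -/
noncomputable def locLen (p : Ideal R) (M : Type) [AddCommGroup M] [Module R M] : ℕ :=
  if hp : p.IsPrime then
    letI := hp
    flen (Localization.AtPrime p) (LocalizedModule p.primeCompl M)
  else 0

/-- The arithmetic degree `adeg(I, M) = Σ_{p ∈ Ass M} ℓ_{R_p}(H⁰_{pR_p}(M_p)) · e₀(I, R/p)`. -/
noncomputable def adeg (I : Ideal R) (M : Type) [AddCommGroup M] [Module R M] : ℕ :=
  ∑ᶠ p ∈ associatedPrimes R M, locLenH0 R p M * mult R I (R ⧸ p) (dimnat R (R ⧸ p))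

variable {R}

/-- An `I`-filter regular sequence on `M`. -/
def IsFilterRegularSeq (I : Ideal R) (M : Type) [AddCommGroup M] [Module R M]
    {t : ℕ} (x : Fin t → R) : Prop :=
  (∀ i, x i ∈ I) ∧ ∀ i : Fin t,
    Module.support R ↥(LinearMap.ker (LinearMap.lsmul R
      (M ⧸ (Ideal.span (x '' {j | j < i}) • ⊤ : Submodule R M)) (x i)))
      ⊆ PrimeSpectrum.zeroLocus (I : Set R)

end Defs

/-! Since `x` kills `U`, `U ≤ 0 :_M x`. Conversely `0 :_M x` is killed by `x` and by `Ann M`, so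
its support lies in `Supp M ∩ V(x) = Supp (M/xM)`, which has dimension `d - 1 < d`; maximality of
the unmixed component gives `0 :_M x ≤ U`. -/

lemma Submodule.le_ker_lsmul_iff_mem_annihilator {R M : Type} [CommRing R] [AddCommGroup M]
    [Module R M] {N : Submodule R M} {x : R} :
    N ≤ LinearMap.ker (LinearMap.lsmul R M x) ↔ x ∈ Module.annihilator R N := by
  simp only [SetLike.le_def, LinearMap.mem_ker, LinearMap.lsmul_apply, Module.mem_annihilator,
    Subtype.forall, Subtype.ext_iff, SetLike.val_smul, ZeroMemClass.coe_zero]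

lemma moduleDim_le_of_zeroLocus_subset {R M N : Type} [CommRing R] [AddCommGroup M] [Module R M]
    [AddCommGroup N] [Module R N]
    (h : PrimeSpectrum.zeroLocus (Module.annihilator R N : Set R) ⊆
      PrimeSpectrum.zeroLocus (Module.annihilator R M : Set R)) :
    moduleDim R N ≤ moduleDim R M := by
  rw [moduleDim, moduleDim, ringKrullDim_quotient, ringKrullDim_quotient]
  exact Order.krullDim_le_of_strictMono (Set.inclusion h) fun _ _ hpq => hpq

lemma moduleDim_le_moduleDim_quotient_smul_top {R M N : Type} [CommRing R] [AddCommGroup M]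
    [Module R M] [Module.Finite R M] [AddCommGroup N] [Module R N] {I : Ideal R}
    (hM : Module.annihilator R M ≤ Module.annihilator R N) (hI : I ≤ Module.annihilator R N) :
    moduleDim R N ≤ moduleDim R (M ⧸ (I • ⊤ : Submodule R M)) := by
  refine moduleDim_le_of_zeroLocus_subset ?_
  rw [← Module.support_eq_zeroLocus (M := M ⧸ _), Module.support_quotient,
    Module.support_eq_zeroLocus]
  exact fun p hp => ⟨PrimeSpectrum.zeroLocus_anti_mono hM hp,
    PrimeSpectrum.zeroLocus_anti_mono hI hp⟩

theorem stmt1_general {R : Type} [CommRing R] [IsLocalRing R]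
    (M : Type) [AddCommGroup M] [Module R M] [Module.Finite R M]
    (d : ℕ) (hd : 0 < d)
    (U : Submodule R M) (hU : IsUnmixedComponent d U)
    (x : R) (hx : IsParamElt d M x) (hxa : x ∈ Module.annihilator R ↥U) :
    U = LinearMap.ker (LinearMap.lsmul R M x) := by
  set K := LinearMap.ker (LinearMap.lsmul R M x)
  refine le_antisymm (Submodule.le_ker_lsmul_iff_mem_annihilator.mpr hxa) (hU.2 K ?_)
  have hxK : x ∈ Module.annihilator R K := Submodule.le_ker_lsmul_iff_mem_annihilator.mp le_rfl
  calc moduleDim R K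
      ≤ moduleDim R (M ⧸ (Ideal.span {x} • ⊤ : Submodule R M)) :=
        moduleDim_le_moduleDim_quotient_smul_top
          (K.subtype.annihilator_le_of_injective K.injective_subtype)
          ((Ideal.span_singleton_le_iff_mem _).mpr hxK)
    _ = ((d - 1 : ℕ) : WithBot ℕ∞) := hx.2
    _ < d := by exact_mod_cast Nat.sub_lt hd one_pos

/-- If `x` is a parameter element of `M` contained in `Ann U_M(0)`, then
`U_M(0) = 0 :_M x`. -/
theorem stmt1 {R : Type} [CommRing R] [IsLocalRing R] [IsNoetherianRing R]
    (M : Type) [AddCommGroup M] [Module R M] [Module.Finite R M]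
    (d : ℕ) (hd : 0 < d) (hdim : moduleDim R M = (d : WithBot ℕ∞))
    (U : Submodule R M) (hU : IsUnmixedComponent d U)
    (x : R) (hx : IsParamElt d M x) (hxa : x ∈ Module.annihilator R ↥U) :
    U = LinearMap.ker (LinearMap.lsmul R M x) :=
  stmt1_general M d hd U hU x hx hxa
end

section
/- Let (R,m) be a Noetherian local ring, M a finitely generated R-module of dimension d > 0, and x a parameter element of M. Then b(M) ⊆ b(M/xM), where b(N) denotes the intersection over all systems of parameters y_1,...,y_s of N and all i ≤ s of Ann((y_1,...,y_{i-1})N : y_i)/((y_1,...,y_{i-1})N). -/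
open Submodule IsLocalRing Classical CategoryTheory

/-!
If `y₁, …, y_{d-1}` is a system of parameters of `M/xM`, then `x, y₁, …, y_{d-1}` is one of `M`,
and since `(M/xM)/(y₁, …, y_{i-1})(M/xM) ≅ M/(x, y₁, …, y_{i-1})M`, the `i`-th colon module of
`y` on `M/xM` is the `(i+1)`-th colon module of `(x, y)` on `M`.
-/

section

variable {R : Type} [CommRing R]

noncomputable def Submodule.quotSMulTopQuotSMulTopEquiv {M : Type*} [AddCommGroup M] [Module R M]
    (I J : Ideal R) :
    ((M ⧸ (I • ⊤ : Submodule R M)) ⧸ (J • ⊤ : Submodule R (M ⧸ (I • ⊤ : Submodule R M))))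
      ≃ₗ[R] M ⧸ ((I ⊔ J) • ⊤ : Submodule R M) :=
  quotEquivOfEq _ _ (by rw [map_smul'', map_top, range_mkQ]) ≪≫ₗ
    quotientQuotientEquivQuotientSup (I • ⊤) (J • ⊤) ≪≫ₗ
      quotEquivOfEq _ _ (Submodule.sup_smul I J ⊤).symm

theorem LinearEquiv.annihilator_ker_lsmul_eq {N N' : Type*} [AddCommGroup N] [Module R N]
    [AddCommGroup N'] [Module R N'] (e : N ≃ₗ[R] N') (a : R) :
    Module.annihilator R (LinearMap.ker (LinearMap.lsmul R N a)) =
      Module.annihilator R (LinearMap.ker (LinearMap.lsmul R N' a)) := by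
  have hcomm : (LinearMap.lsmul R N' a).comp (e : N →ₗ[R] N') =
      (e : N →ₗ[R] N').comp (LinearMap.lsmul R N a) := by
    ext; simp
  have hker : LinearMap.ker (LinearMap.lsmul R N a) =
      (LinearMap.ker (LinearMap.lsmul R N' a)).map (e.symm : N' →ₗ[R] N) := by
    rw [← Submodule.comap_equiv_eq_map_symm, ← LinearMap.ker_comp, hcomm, LinearEquiv.ker_comp]
  rw [hker]
  exact (e.symm.submoduleMap _).annihilator_eq.symm

theorem LinearEquiv.moduleDim_eq {N N' : Type} [AddCommGroup N] [Module R N]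
    [AddCommGroup N'] [Module R N'] (e : N ≃ₗ[R] N') : moduleDim R N = moduleDim R N' := by
  rw [moduleDim, moduleDim, e.annihilator_eq]

theorem Fin.cons_image_setOf_lt_succ {α : Type*} {n : ℕ} (x : α) (y : Fin n → α) (i : Fin n) :
    (Fin.cons x y : Fin (n + 1) → α) '' {j | j < i.succ} = insert x (y '' {j | j < i}) := by
  ext r
  simp only [Set.mem_image, Set.mem_ofPred_eq, Set.mem_insert_iff, Fin.exists_fin_succ,
    Fin.cons_zero, Fin.cons_succ, Fin.succ_pos, Fin.succ_lt_succ_iff, true_and]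
  tauto

section

variable [IsLocalRing R] {M : Type} [AddCommGroup M] [Module R M] {x : R}

theorem IsSOP.cons {n : ℕ} (hx : x ∈ maximalIdeal R) {y : Fin n → R}
    (hy : IsSOP (M ⧸ (Ideal.span {x} • ⊤ : Submodule R M)) y) :
    IsSOP M (Fin.cons x y : Fin (n + 1) → R) := by
  refine ⟨Fin.cases hx hy.1, ?_⟩
  rw [Fin.range_cons, Ideal.span_insert,
    ← (quotSMulTopQuotSMulTopEquiv _ _).moduleDim_eq]
  exact hy.2

variable (R M) in
theorem bIdeal_zero : bIdeal R M 0 = ⊤ := by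
  simp [bIdeal]

theorem bIdeal_succ_le_bIdeal_quotient (hx : x ∈ maximalIdeal R) (n : ℕ) :
    bIdeal R M (n + 1) ≤ bIdeal R (M ⧸ (Ideal.span {x} • ⊤ : Submodule R M)) n := by
  refine le_iInf₂ fun y hy => le_iInf fun i => ?_
  refine (iInf₂_le _ (hy.cons hx)).trans ((iInf_le _ i.succ).trans_eq ?_)
  rw [Fin.cons_succ]
  refine LinearEquiv.annihilator_ker_lsmul_eq ?_ _
  exact quotEquivOfEq _ _ (by rw [Fin.cons_image_setOf_lt_succ, Ideal.span_insert]) ≪≫ₗ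
    (quotSMulTopQuotSMulTopEquiv _ _).symm

end

end

theorem stmt3_general {R : Type} [CommRing R] [IsLocalRing R]
    (M : Type) [AddCommGroup M] [Module R M]
    (d : ℕ) (x : R) (hx : IsParamElt d M x) :
    bIdeal R M d ≤ bIdeal R (M ⧸ (Ideal.span {x} • ⊤ : Submodule R M)) (d - 1) := by
  cases d with
  | zero => simp only [Nat.zero_sub, bIdeal_zero, le_refl]
  | succ n => exact bIdeal_succ_le_bIdeal_quotient hx.1 n

/-- For a parameter element `x` of `M`, one has `b(M) ⊆ b(M/xM)`. -/
theorem stmt3 {R : Type} [CommRing R] [IsLocalRing R] [IsNoetherianRing R]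
    (M : Type) [AddCommGroup M] [Module R M] [Module.Finite R M]
    (d : ℕ) (hd : 0 < d) (hdim : moduleDim R M = (d : WithBot ℕ∞))
    (x : R) (hx : IsParamElt d M x) :
    bIdeal R M d ≤ bIdeal R (M ⧸ (Ideal.span {x} • ⊤ : Submodule R M)) (d - 1) :=
  stmt3_general M d x hx
end

section
/- Let (R,m) be a Noetherian local ring and M a finitely generated R-module of dimension d > 0. Then the ideal b(M) annihilates the unmixed component U_M(0), i.e., b(M) ⊆ Ann_R(U_M(0)). -/
open Submodule IsLocalRing Classical CategoryTheory

/-!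
Since `dim U < d`, the ideal `Ann U ∩ 𝔪` lies in no minimal prime `p` of `Ann M` with
`dim R/p = d`, so prime avoidance yields `x₁ ∈ Ann U ∩ 𝔪` outside all of them. Then
`dim M/x₁M ≤ d - 1`, and repeating prime avoidance (now against `𝔪`) extends `x₁` to a system of
parameters `x₁, …, x_d` of `M`. Since `U ⊆ (0 :_M x₁)`, every element of `b(M)` kills `U`.
-/

section KrullDimQuotient

variable {R : Type} [CommRing R]

theorem ringKrullDim_quotient_anti {I J : Ideal R} (h : I ≤ J) :
    ringKrullDim (R ⧸ J) ≤ ringKrullDim (R ⧸ I) :=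
  ringKrullDim_le_of_surjective _ (Ideal.Quotient.factor_surjective h)

theorem length_le_ringKrullDim_quotient_of_le_head {I : Ideal R}
    (c : LTSeries (PrimeSpectrum R)) (hc : I ≤ c.head.asIdeal) :
    (c.length : WithBot ℕ∞) ≤ ringKrullDim (R ⧸ I) := by
  rw [ringKrullDim_quotient]
  let c' : LTSeries (PrimeSpectrum.zeroLocus (I : Set R)) :=
    { length := c.length
      toFun := fun i => ⟨c i, hc.trans (c.monotone (Fin.zero_le i))⟩
      step := c.step }
  exact Order.LTSeries.length_le_krullDim c'

theorem ringKrullDim_quotient_le_iff {I : Ideal R} {n : WithBot ℕ∞} :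
    ringKrullDim (R ⧸ I) ≤ n ↔
      ∀ c : LTSeries (PrimeSpectrum R), I ≤ c.head.asIdeal → (c.length : WithBot ℕ∞) ≤ n := by
  refine ⟨fun h c hc => (length_le_ringKrullDim_quotient_of_le_head c hc).trans h, fun h => ?_⟩
  rw [ringKrullDim_quotient]
  exact iSup_le fun c => h (c.map Subtype.val fun _ _ => id) c.head.2

theorem exists_mem_ringKrullDim_quotient_sup_span_singleton_le [IsNoetherianRing R]
    {I J : Ideal R} {n : ℕ} (hI : ringKrullDim (R ⧸ I) ≤ (n + 1 : ℕ))
    (hJ : ∀ p ∈ I.minimalPrimes, J ≤ p → ringKrullDim (R ⧸ p) ≤ n) :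
    ∃ x ∈ J, ringKrullDim (R ⧸ (I ⊔ Ideal.span {x})) ≤ n := by
  set S := {p ∈ I.minimalPrimes | ¬ ringKrullDim (R ⧸ p) ≤ n}
  have hS : S.Finite := (Ideal.finite_minimalPrimes_of_isNoetherianRing R I).subset fun _ h => h.1
  obtain ⟨x, hxJ, hxS⟩ : ∃ x ∈ J, ∀ p ∈ S, x ∉ p := by
    have hJS : ¬ (J : Set R) ⊆ ⋃ p ∈ S, (p : Set R) := by
      rw [Ideal.subset_union_prime_finite hS ⊥ ⊥ fun p hp _ _ => hp.1.1.1]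
      rintro ⟨p, ⟨hp, hpn⟩, hJp⟩
      exact hpn (hJ p hp hJp)
    simpa [Set.not_subset] using hJS
  refine ⟨x, hxJ, ringKrullDim_quotient_le_iff.mpr fun c hc => ?_⟩
  obtain ⟨p, hp, hpc⟩ := Ideal.exists_minimalPrimes_le (le_sup_left.trans hc)
  by_cases hpn : ringKrullDim (R ⧸ p) ≤ n
  · exact (length_le_ringKrullDim_quotient_of_le_head c hpc).trans hpn
  have hlt : (⟨p, hp.1.1⟩ : PrimeSpectrum R) < c.head := by
    refine lt_of_le_of_ne hpc fun h => hxS p ⟨hp, hpn⟩ ?_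
    rw [show p = c.head.asIdeal from congrArg PrimeSpectrum.asIdeal h]
    exact hc (Ideal.mem_sup_right (Ideal.mem_span_singleton_self x))
  have := (length_le_ringKrullDim_quotient_of_le_head (c.cons _ hlt) hp.1.2).trans hI
  rw [RelSeries.cons_length] at this
  exact_mod_cast Nat.le_of_succ_le_succ (by exact_mod_cast this)

theorem ringKrullDim_quotient_eq_zero_of_maximalIdeal_le [IsLocalRing R] {p : Ideal R}
    (hp : p ≠ ⊤) (hmp : maximalIdeal R ≤ p) : ringKrullDim (R ⧸ p) = 0 := by
  rw [← (maximalIdeal.isMaximal R).eq_of_le hp hmp]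
  exact @ringKrullDim_eq_zero_of_field _ (Ideal.Quotient.field _)

theorem exists_ringKrullDim_quotient_sup_span_range_le_zero [IsLocalRing R] [IsNoetherianRing R]
    (n : ℕ) {I : Ideal R} (hI : ringKrullDim (R ⧸ I) ≤ n) :
    ∃ y : Fin n → R, (∀ i, y i ∈ maximalIdeal R) ∧
      ringKrullDim (R ⧸ (I ⊔ Ideal.span (Set.range y))) ≤ 0 := by
  induction n generalizing I with
  | zero => exact ⟨Fin.elim0, fun i => i.elim0, by
    rwa [Set.range_eq_empty, Ideal.span_empty, sup_bot_eq]⟩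
  | succ n ih =>
    have hm : ∀ p ∈ I.minimalPrimes, maximalIdeal R ≤ p → ringKrullDim (R ⧸ p) ≤ n :=
      fun p hp hmp => by
        rw [ringKrullDim_quotient_eq_zero_of_maximalIdeal_le hp.1.1.ne_top hmp]
        exact_mod_cast Nat.zero_le n
    obtain ⟨x, hxm, hx⟩ := exists_mem_ringKrullDim_quotient_sup_span_singleton_le hI hm
    obtain ⟨y, hym, hy⟩ := ih hx
    refine ⟨Fin.cons x y, Fin.cases hxm hym, ?_⟩
    rwa [Fin.range_cons, Ideal.span_insert, ← sup_assoc]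

end KrullDimQuotient

section SystemOfParameters

variable {R : Type} [CommRing R] {M : Type} [AddCommGroup M] [Module R M]

theorem annihilator_sup_le_annihilator_quotient_smul_top (I : Ideal R) :
    Module.annihilator R M ⊔ I ≤ Module.annihilator R (M ⧸ (I • ⊤ : Submodule R M)) := by
  refine sup_le ((Submodule.mkQ _).annihilator_le_of_surjective (Submodule.mkQ_surjective _))
    fun r hr => Module.mem_annihilator.mpr fun m => ?_
  obtain ⟨m, rfl⟩ := Submodule.Quotient.mk_surjective _ m
  rw [← Submodule.Quotient.mk_smul, Submodule.Quotient.mk_eq_zero]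
  exact Submodule.smul_mem_smul hr Submodule.mem_top

theorem moduleDim_quotient_smul_top_le (I : Ideal R) :
    moduleDim R (M ⧸ (I • ⊤ : Submodule R M)) ≤ ringKrullDim (R ⧸ (Module.annihilator R M ⊔ I)) :=
  ringKrullDim_quotient_anti (annihilator_sup_le_annihilator_quotient_smul_top I)

variable [IsLocalRing R]

theorem isSOP_of_ringKrullDim_quotient_le_zero {d : ℕ} {x : Fin d → R}
    (hx : ∀ i, x i ∈ maximalIdeal R)
    (h : ringKrullDim (R ⧸ (Module.annihilator R M ⊔ Ideal.span (Set.range x))) ≤ 0) :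
    IsSOP M x :=
  ⟨hx, (moduleDim_quotient_smul_top_le _).trans h⟩

theorem exists_isSOP_head_eq [IsNoetherianRing R] {e : ℕ} {x₀ : R} (hx₀ : x₀ ∈ maximalIdeal R)
    (h : ringKrullDim (R ⧸ (Module.annihilator R M ⊔ Ideal.span {x₀})) ≤ e) :
    ∃ x : Fin (e + 1) → R, IsSOP M x ∧ x 0 = x₀ := by
  obtain ⟨y, hy, hdim⟩ := exists_ringKrullDim_quotient_sup_span_range_le_zero e h
  refine ⟨Fin.cons x₀ y, isSOP_of_ringKrullDim_quotient_le_zero (Fin.cases hx₀ hy) ?_, rfl⟩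
  rwa [Fin.range_cons, Ideal.span_insert, ← sup_assoc]

theorem bIdeal_le_annihilator_of_isSOP {d : ℕ} {x : Fin (d + 1) → R} (hx : IsSOP M x)
    {U : Submodule R M} (hU : x 0 ∈ Module.annihilator R U) :
    bIdeal R M (d + 1) ≤ Module.annihilator R U := by
  set N : Submodule R M := Ideal.span (x '' {j | j < 0}) • ⊤
  have hN : N = ⊥ := by simp [N]
  let f : U →ₗ[R] LinearMap.ker (LinearMap.lsmul R (M ⧸ N) (x 0)) :=
    LinearMap.codRestrict _ (N.mkQ ∘ₗ U.subtype) fun u => by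
      have hu : x 0 • (u : M) = 0 := congrArg Subtype.val (Module.mem_annihilator.mp hU u)
      simp [← Submodule.Quotient.mk_smul, hu]
  have hf : Function.Injective f := fun u v huv => by
    have h : N.mkQ (u : M) = N.mkQ v := congrArg Subtype.val huv
    rw [Submodule.mkQ_apply, Submodule.mkQ_apply, Submodule.Quotient.eq, hN,
      Submodule.mem_bot, sub_eq_zero] at h
    exact Subtype.ext h
  refine le_trans ?_ (f.annihilator_le_of_injective hf)
  exact (iInf₂_le x hx).trans (iInf_le _ 0)

end SystemOfParameters

theorem stmt4_general {R : Type} [CommRing R] [IsLocalRing R] [IsNoetherianRing R]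
    (M : Type) [AddCommGroup M] [Module R M]
    (d : ℕ) (hd : 0 < d) (hdim : moduleDim R M = (d : WithBot ℕ∞))
    (U : Submodule R M) (hU : IsUnmixedComponent d U) :
    bIdeal R M d ≤ Module.annihilator R ↥U := by
  obtain ⟨e, rfl⟩ : ∃ e, d = e + 1 := ⟨d - 1, by omega⟩
  have hmin : ∀ p ∈ (Module.annihilator R M).minimalPrimes,
      Module.annihilator R U ⊓ maximalIdeal R ≤ p → ringKrullDim (R ⧸ p) ≤ e := by
    intro p hp hJp
    rcases (Ideal.IsPrime.inf_le hp.1.1).mp hJp with hUp | hmp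
    · exact ENat.WithBot.lt_add_one_iff.mp ((ringKrullDim_quotient_anti hUp).trans_lt hU.1)
    · rw [ringKrullDim_quotient_eq_zero_of_maximalIdeal_le hp.1.1.ne_top hmp]
      exact_mod_cast Nat.zero_le e
  obtain ⟨x₀, hx₀, hdim₀⟩ :=
    exists_mem_ringKrullDim_quotient_sup_span_singleton_le hdim.le hmin
  obtain ⟨x, hx, rfl⟩ := exists_isSOP_head_eq (M := M) (Ideal.mem_inf.mp hx₀).2 hdim₀
  exact bIdeal_le_annihilator_of_isSOP hx (Ideal.mem_inf.mp hx₀).1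

/-- The ideal `b(M)` annihilates the unmixed component `U_M(0)`. -/
theorem stmt4 {R : Type} [CommRing R] [IsLocalRing R] [IsNoetherianRing R]
    (M : Type) [AddCommGroup M] [Module R M] [Module.Finite R M]
    (d : ℕ) (hd : 0 < d) (hdim : moduleDim R M = (d : WithBot ℕ∞))
    (U : Submodule R M) (hU : IsUnmixedComponent d U) :
    bIdeal R M d ≤ Module.annihilator R ↥U :=
  stmt4_general M d hd hdim U hU
end
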